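/- Let s > 0 be non-integer, let 𝔟 = 1 − 2(s − ⌊s⌋), and let ⌈s⌉ = ⌊s⌋ + 1. Then the ⌈s⌉-fold iterate (D_𝔟 + 1)^{⌈s⌉} ψ_s, computed pointwise on (0, ∞), vanishes identically: ((D_𝔟 + 1)^{⌈s⌉} ψ_s)(y) = 0 for every y > 0. -/

import Mathlib

open MeasureTheory Real Filter Set

/-- The modified Bessel function of the second kind, for `y > 0` given by
`K_s(y) = ∫_0^∞ e^{−y·cosh t}·cosh(s·t) dt`. -/
noncomputable def besselK (s y : ℝ) : ℝ :=
  ∫ t in Set.Ioi (0 : ℝ), Real.exp (-(y * Real.cosh t)) * Real.cosh (s * t)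

/-- `ψ_s(y) = (2^{1−s}/Γ(s))·|y|^s·K_s(|y|)` for `y ≠ 0`, and `ψ_s(0) = 1`. -/
noncomputable def psi (s : ℝ) (y : ℝ) : ℝ :=
  if y = 0 then 1
  else (2 : ℝ) ^ (1 - s) / Real.Gamma s * |y| ^ s * besselK s |y|

/-- The operator `f ↦ D_b f + λ·f`, where `(D_b f)(y) = −f''(y) − (b/y)·f'(y)`. -/
noncomputable def DLam (b lam : ℝ) (f : ℝ → ℝ) : ℝ → ℝ :=
  fun y => -(deriv (deriv f) y) - b / y * deriv f y + lam * f y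

/-- The `n`-fold iterate `(D_b + λ)^n f`, computed pointwise. -/
noncomputable def DLamIter (b lam : ℝ) (n : ℕ) (f : ℝ → ℝ) : ℝ → ℝ :=
  (DLam b lam)^[n] f

open Topology

/-!
Differentiating under the integral sign in `K_ν(y) = ∫_0^∞ e^{-y cosh t} cosh(νt) dt` and using
`2 cosh t cosh νt = cosh (ν+1)t + cosh (ν-1)t` gives `K_ν' = -(K_{ν+1} + K_{ν-1})/2`, while
integrating `d/dt (e^{-y cosh t} sinh νt)` over `(0, ∞)` gives `y (K_{ν+1} - K_{ν-1}) = 2ν K_ν`.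
Together they yield `(D_b + 1)(y^a K_a) = (2a + b - 1) y^{a-1} K_{a-1}`, hence
`(D_b + 1)^n (y^a K_a) = ∏_{k<n} (2(a-k) + b - 1) · y^{a-n} K_{a-n}` on `(0, ∞)`. For
`b = 1 - 2(s - ⌊s⌋)` the factor with `k = ⌊s⌋` vanishes.
-/

lemma cosh_le_exp_abs (x : ℝ) : cosh x ≤ exp |x| := by
  rw [← cosh_abs, cosh_eq]
  linarith [exp_le_exp.2 (neg_le_self (abs_nonneg x))]

lemma sq_abs_div_four_le_cosh (t : ℝ) : |t| ^ 2 / 4 ≤ cosh t := by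
  rw [← cosh_abs, cosh_eq]
  nlinarith [quadratic_le_exp_of_nonneg (abs_nonneg t), exp_pos (-|t|), abs_nonneg t]

lemma exp_neg_mul_cosh_mul_cosh_le {y : ℝ} (hy : 0 < y) (ν t : ℝ) :
    exp (-(y * cosh t)) * cosh (ν * t) ≤ exp ((|ν| + 1) ^ 2 / y) * exp (-|t|) := by
  have hcosh : cosh (ν * t) ≤ exp (|ν| * |t|) := abs_mul ν t ▸ cosh_le_exp_abs _
  have hamgm : (|ν| + 1) * |t| ≤ (|ν| + 1) ^ 2 / y + y * (|t| ^ 2 / 4) := by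
    rw [div_add' _ _ _ hy.ne', le_div_iff₀ hy]
    nlinarith [sq_nonneg (y * |t| / 2 - (|ν| + 1))]
  have hexp : |ν| * |t| - y * cosh t ≤ (|ν| + 1) ^ 2 / y - |t| := by
    nlinarith [mul_le_mul_of_nonneg_left (sq_abs_div_four_le_cosh t) hy.le]
  calc exp (-(y * cosh t)) * cosh (ν * t) ≤ exp (-(y * cosh t)) * exp (|ν| * |t|) :=
        mul_le_mul_of_nonneg_left hcosh (exp_pos _).le
    _ = exp (|ν| * |t| - y * cosh t) := by rw [← exp_add]; ring_nf
    _ ≤ exp ((|ν| + 1) ^ 2 / y - |t|) := exp_le_exp.2 hexp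
    _ = exp ((|ν| + 1) ^ 2 / y) * exp (-|t|) := by rw [sub_eq_add_neg, exp_add]

lemma integrableOn_besselK_integrand {y : ℝ} (hy : 0 < y) (ν : ℝ) :
    IntegrableOn (fun t => exp (-(y * cosh t)) * cosh (ν * t)) (Ioi 0) := by
  refine ((exp_neg_integrableOn_Ioi 0 one_pos).const_mul (exp ((|ν| + 1) ^ 2 / y))).mono'
    (by fun_prop : Continuous _).aestronglyMeasurable ?_
  filter_upwards [ae_restrict_mem measurableSet_Ioi] with t ht
  rw [norm_of_nonneg (by positivity), neg_one_mul]
  simpa only [abs_of_pos (show (0 : ℝ) < t from ht)] using exp_neg_mul_cosh_mul_cosh_le hy ν t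

lemma cosh_mul_besselK_integrand (y ν t : ℝ) :
    cosh t * (exp (-(y * cosh t)) * cosh (ν * t)) =
      (exp (-(y * cosh t)) * cosh ((ν + 1) * t) +
        exp (-(y * cosh t)) * cosh ((ν - 1) * t)) / 2 := by
  rw [add_mul, sub_mul, one_mul, cosh_add, cosh_sub]
  ring

lemma integrableOn_cosh_mul_besselK_integrand {y : ℝ} (hy : 0 < y) (ν : ℝ) :
    IntegrableOn (fun t => cosh t * (exp (-(y * cosh t)) * cosh (ν * t))) (Ioi 0) := by
  simp_rw [cosh_mul_besselK_integrand]
  exact ((integrableOn_besselK_integrand hy _).add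
    (integrableOn_besselK_integrand hy _)).div_const 2

lemma integral_cosh_mul_besselK_integrand {y : ℝ} (hy : 0 < y) (ν : ℝ) :
    ∫ t in Ioi (0 : ℝ), cosh t * (exp (-(y * cosh t)) * cosh (ν * t)) =
      (besselK (ν + 1) y + besselK (ν - 1) y) / 2 := by
  simp_rw [cosh_mul_besselK_integrand]
  rw [integral_div, integral_add (integrableOn_besselK_integrand hy _)
    (integrableOn_besselK_integrand hy _)]
  rfl

lemma hasDerivAt_besselK {y : ℝ} (hy : 0 < y) (ν : ℝ) :
    HasDerivAt (besselK ν) (-((besselK (ν + 1) y + besselK (ν - 1) y) / 2)) y := by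
  have hderiv : ∀ x t : ℝ, HasDerivAt (fun x => exp (-(x * cosh t)) * cosh (ν * t))
      (-(cosh t * (exp (-(x * cosh t)) * cosh (ν * t)))) x := fun x t =>
    (((hasDerivAt_id x).mul_const (cosh t)).neg.exp.mul_const _).congr_deriv
      (by simp only [id, Pi.neg_apply, one_mul]; ring)
  have hbound : ∀ t, ∀ x ∈ Ioi (y / 2), ‖-(cosh t * (exp (-(x * cosh t)) * cosh (ν * t)))‖ ≤
      cosh t * (exp (-(y / 2 * cosh t)) * cosh (ν * t)) := fun t x hx => by
    rw [norm_neg, norm_of_nonneg (by positivity)]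
    gcongr
    exact hx.out.le
  have key := hasDerivAt_integral_of_dominated_loc_of_deriv_le (μ := volume.restrict (Ioi 0))
    (F := fun x t => exp (-(x * cosh t)) * cosh (ν * t))
    (Ioi_mem_nhds (half_lt_self hy))
    (.of_forall fun x => (by fun_prop : Continuous _).aestronglyMeasurable)
    (integrableOn_besselK_integrand hy ν) (by fun_prop : Continuous _).aestronglyMeasurable
    (.of_forall hbound) (integrableOn_cosh_mul_besselK_integrand (half_pos hy) ν)
    (.of_forall fun t x _ => hderiv x t)
  rw [integral_neg, integral_cosh_mul_besselK_integrand hy] at key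
  exact key.2

lemma besselK_add_one_sub_besselK_sub_one {y : ℝ} (hy : 0 < y) (ν : ℝ) :
    y * (besselK (ν + 1) y - besselK (ν - 1) y) = 2 * ν * besselK ν y := by
  set E : ℝ → ℝ → ℝ := fun μ t => exp (-(y * cosh t)) * cosh (μ * t) with hE
  have hEint : ∀ μ, IntegrableOn (E μ) (Ioi 0) := integrableOn_besselK_integrand hy
  set g : ℝ → ℝ := fun t => exp (-(y * cosh t)) * sinh (ν * t)
  set g' : ℝ → ℝ := fun t => ν * E ν t - y * ((E (ν + 1) t - E (ν - 1) t) / 2)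
  have hg : ∀ t, HasDerivAt g (g' t) t := fun t =>
    (((hasDerivAt_cosh t).const_mul y).neg.exp.mul ((hasDerivAt_id t).const_mul ν).sinh).congr_deriv
      (by simp only [g', hE, id, Pi.neg_apply, add_mul, sub_mul, one_mul, cosh_add, cosh_sub]; ring)
  have hg'int : IntegrableOn g' (Ioi 0) :=
    ((hEint ν).const_mul ν).sub ((((hEint _).sub (hEint _)).div_const 2).const_mul y)
  have hgint : IntegrableOn g (Ioi 0) := by
    refine (hEint ν).mono' (by fun_prop : Continuous g).aestronglyMeasurable
      (.of_forall fun t => ?_)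
    rw [norm_mul, norm_of_nonneg (exp_pos _).le, norm_eq_abs, abs_sinh]
    exact mul_le_mul_of_nonneg_left ((sinh_lt_cosh _).le.trans_eq (cosh_abs _)) (exp_pos _).le
  have hibp := integral_Ioi_of_hasDerivAt_of_tendsto' (fun t _ => hg t) hg'int
    (tendsto_zero_of_hasDerivAt_of_integrableOn_Ioi (fun t _ => hg t) hg'int hgint)
  have hval : ∫ t in Ioi 0, g' t =
      ν * besselK ν y - y * ((besselK (ν + 1) y - besselK (ν - 1) y) / 2) := by
    rw [integral_sub, integral_const_mul, integral_const_mul, integral_div, integral_sub]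
    exacts [rfl, hEint _, hEint _, (hEint ν).const_mul ν,
      (((hEint _).sub (hEint _)).div_const 2).const_mul y]
  simp only [hval, g, mul_zero, sinh_zero, sub_zero] at hibp
  linear_combination -2 * hibp

lemma rpow_eq_rpow_sub_one_mul {x : ℝ} (hx : x ≠ 0) (c : ℝ) : x ^ c = x ^ (c - 1) * x := by
  rw [← rpow_add_one hx, sub_add_cancel]

lemma hasDerivAt_rpow_mul_besselK {y : ℝ} (hy : 0 < y) (c ν : ℝ) :
    HasDerivAt (fun x => x ^ c * besselK ν x)
      (c * y ^ (c - 1) * besselK ν y - y ^ c * ((besselK (ν + 1) y + besselK (ν - 1) y) / 2)) y :=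
  ((hasDerivAt_rpow_const (Or.inl hy.ne')).mul (hasDerivAt_besselK hy ν)).congr_deriv (by ring)

lemma hasDerivAt_rpow_mul_besselK_lower {y : ℝ} (hy : 0 < y) (c ν : ℝ) :
    HasDerivAt (fun x => x ^ c * besselK ν x)
      ((c - ν) * y ^ (c - 1) * besselK ν y - y ^ c * besselK (ν - 1) y) y :=
  (hasDerivAt_rpow_mul_besselK hy c ν).congr_deriv <| by
    rw [rpow_eq_rpow_sub_one_mul hy.ne' c]
    linear_combination (-(y ^ (c - 1)) / 2) * besselK_add_one_sub_besselK_sub_one hy ν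

lemma hasDerivAt_rpow_mul_besselK_raise {y : ℝ} (hy : 0 < y) (c ν : ℝ) :
    HasDerivAt (fun x => x ^ c * besselK ν x)
      ((c + ν) * y ^ (c - 1) * besselK ν y - y ^ c * besselK (ν + 1) y) y :=
  (hasDerivAt_rpow_mul_besselK hy c ν).congr_deriv <| by
    rw [rpow_eq_rpow_sub_one_mul hy.ne' c]
    linear_combination (y ^ (c - 1) / 2) * besselK_add_one_sub_besselK_sub_one hy ν

lemma DLam_rpow_mul_besselK (a b : ℝ) {y : ℝ} (hy : 0 < y) :
    DLam b 1 (fun x => x ^ a * besselK a x) y =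
      (2 * a + b - 1) * (y ^ (a - 1) * besselK (a - 1) y) := by
  have hF : ∀ x ∈ Ioi (0 : ℝ), HasDerivAt (fun x => x ^ a * besselK a x)
      (-(x ^ a * besselK (a - 1) x)) x := fun x hx =>
    (hasDerivAt_rpow_mul_besselK_lower hx a a).congr_deriv (by ring)
  have hderiv : deriv (fun x => x ^ a * besselK a x) =ᶠ[𝓝 y]
      fun x => -(x ^ a * besselK (a - 1) x) :=
    eventually_of_mem (Ioi_mem_nhds hy) fun x hx => (hF x hx).deriv
  rw [DLam, hderiv.deriv_eq, deriv.fun_neg, (hasDerivAt_rpow_mul_besselK_raise hy a (a - 1)).deriv,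
    sub_add_cancel, (hF y hy).deriv, rpow_eq_rpow_sub_one_mul hy.ne' a]
  field_simp
  ring

lemma eqOn_DLam_of_eqOn {U : Set ℝ} (hU : IsOpen U) {f g : ℝ → ℝ} (h : EqOn f g U) (b lam : ℝ) :
    EqOn (DLam b lam f) (DLam b lam g) U := fun y hy => by
  have hfg : f =ᶠ[𝓝 y] g := eventuallyEq_of_mem (hU.mem_nhds hy) h
  rw [DLam, DLam, hfg.deriv.deriv_eq, hfg.deriv_eq, h hy]

lemma eqOn_DLam_iterate_of_eqOn {U : Set ℝ} (hU : IsOpen U) {f g : ℝ → ℝ} (h : EqOn f g U)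
    (b lam : ℝ) (n : ℕ) : EqOn ((DLam b lam)^[n] f) ((DLam b lam)^[n] g) U := by
  induction n with
  | zero => exact h
  | succ n ih =>
    simp only [Function.iterate_succ_apply']
    exact eqOn_DLam_of_eqOn hU ih b lam

lemma DLam_const_mul (b lam c : ℝ) (f : ℝ → ℝ) (y : ℝ) :
    DLam b lam (fun x => c * f x) y = c * DLam b lam f y := by
  simp only [DLam, deriv_const_mul_field']
  ring

lemma DLam_iterate_const_mul (b lam c : ℝ) (f : ℝ → ℝ) (n : ℕ) (y : ℝ) :
    (DLam b lam)^[n] (fun x => c * f x) y = c * (DLam b lam)^[n] f y := by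
  induction n generalizing y with
  | zero => rfl
  | succ n ih =>
    rw [Function.iterate_succ_apply', funext ih, DLam_const_mul, Function.iterate_succ_apply']

lemma DLam_iterate_rpow_mul_besselK (a b : ℝ) (n : ℕ) :
    EqOn ((DLam b 1)^[n] fun x => x ^ a * besselK a x)
      (fun x => (∏ k ∈ Finset.range n, (2 * (a - k) + b - 1)) * (x ^ (a - n) * besselK (a - n) x))
      (Ioi 0) := by
  induction n with
  | zero => intro x _; simp
  | succ n ih =>
    intro y hy
    have hexp : a - n - 1 = a - ↑(n + 1) := by push_cast; ring
    rw [Function.iterate_succ_apply', eqOn_DLam_of_eqOn isOpen_Ioi ih b 1 hy, DLam_const_mul,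
      DLam_rpow_mul_besselK _ _ hy, Finset.prod_range_succ, hexp]
    ring

lemma psi_eqOn (s : ℝ) :
    EqOn (psi s) (fun x => 2 ^ (1 - s) / Gamma s * (x ^ s * besselK s x)) (Ioi 0) := fun x hx => by
  simp only [psi, if_neg hx.out.ne', abs_of_pos hx.out]
  ring

theorem psi_annihilated_by_iterate_general (s : ℝ) (b : ℝ) (hb : b = 1 - 2 * (s - (⌊s⌋₊ : ℝ))) :
    ∀ y : ℝ, 0 < y → DLamIter b 1 (⌊s⌋₊ + 1) (psi s) y = 0 := by
  intro y hy
  have hfactor : 2 * (s - ⌊s⌋₊) + b - 1 = 0 := by rw [hb]; ring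
  rw [DLamIter, eqOn_DLam_iterate_of_eqOn isOpen_Ioi (psi_eqOn s) b 1 _ hy, DLam_iterate_const_mul,
    DLam_iterate_rpow_mul_besselK s b _ hy, Finset.prod_range_succ, hfactor]
  simp

/-- for non-integer `s > 0`, with `𝔟 = 1 − 2(s − ⌊s⌋)` and `⌈s⌉ = ⌊s⌋ + 1`,
the iterate `(D_𝔟 + 1)^{⌈s⌉} ψ_s` vanishes identically on `(0,∞)`. -/
theorem psi_annihilated_by_iterate (s : ℝ) (hs : 0 < s) (hni : ∀ n : ℤ, s ≠ n)
    (b : ℝ) (hb : b = 1 - 2 * (s - (⌊s⌋₊ : ℝ))) :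
    ∀ y : ℝ, 0 < y → DLamIter b 1 (⌊s⌋₊ + 1) (psi s) y = 0 :=
  psi_annihilated_by_iterate_general s b hb
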